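/- arXiv:1507.08668 — 3 statements merged into one kernel-verified Lean document; each statement's English description precedes it below -/
import Mathlib

section
/- For every integer n ≥ 2 and all z, ζ ∈ ℂ with z ≠ ζ, the function z ↦ K_{n,n}(z−ζ) is smooth near z and Δ_z [K_{n,n}(z−ζ)] = 4·K_{n−1,n−1}(z−ζ), where Δ = ∂²/∂x² + ∂²/∂y² (z = x+iy). -/
open MeasureTheory Complex Filter Topology Finset
open scoped Real ENNReal NNReal ComplexConjugate

noncomputable section

/-- The open upper half-plane. -/
def UHP : Set ℂ := {z | 0 < z.im}

/-- The closed upper half-plane. -/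
def UHPcl : Set ℂ := {z | 0 ≤ z.im}

/-- The Laplacian `∂²/∂x² + ∂²/∂y²` of a function on `ℂ`, computed via iterated
partial derivatives in the two real coordinate directions. -/
def lap {E : Type*} [NormedAddCommGroup E] [NormedSpace ℝ E] (f : ℂ → E) (z : ℂ) : E :=
  iteratedDeriv 2 (fun x : ℝ => f (⟨x, z.im⟩ : ℂ)) z.re +
  iteratedDeriv 2 (fun y : ℝ => f (⟨z.re, y⟩ : ℂ)) z.im

/-- Wirtinger derivative `∂_z = (1/2)(∂/∂x - i ∂/∂y)`. -/
def dZ (f : ℂ → ℂ) (z : ℂ) : ℂ :=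
  (1 / 2) * (deriv (fun x : ℝ => f (⟨x, z.im⟩ : ℂ)) z.re -
    Complex.I * deriv (fun y : ℝ => f (⟨z.re, y⟩ : ℂ)) z.im)

/-- Wirtinger derivative `∂_{z̄} = (1/2)(∂/∂x + i ∂/∂y)`. -/
def dZbar (f : ℂ → ℂ) (z : ℂ) : ℂ :=
  (1 / 2) * (deriv (fun x : ℝ => f (⟨x, z.im⟩ : ℂ)) z.re +
    Complex.I * deriv (fun y : ℝ => f (⟨z.re, y⟩ : ℂ)) z.im)

/-- The Begehr–Hile kernel `K_{m,n}` (complex-valued, general integer indices). -/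
def BHK (m n : ℤ) (z : ℂ) : ℂ :=
  if m ≤ 0 then
    (((-m).toNat.factorial : ℂ) * (-1 : ℂ) ^ m / (((n - 1).toNat.factorial : ℂ) * (Real.pi : ℂ))) *
      z ^ (m - 1) * (conj z) ^ (n - 1)
  else if n ≤ 0 then
    (((-n).toNat.factorial : ℂ) * (-1 : ℂ) ^ n / (((m - 1).toNat.factorial : ℂ) * (Real.pi : ℂ))) *
      z ^ (m - 1) * (conj z) ^ (n - 1)
  else
    (1 / (((m - 1).toNat.factorial : ℂ) * ((n - 1).toNat.factorial : ℂ) * (Real.pi : ℂ))) *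
      z ^ (m - 1) * (conj z) ^ (n - 1) *
      ((Real.log (‖z‖ ^ 2) : ℂ)
        - ∑ k ∈ Finset.Icc 1 (m - 1).toNat, (1 : ℂ) / k
        - ∑ l ∈ Finset.Icc 1 (n - 1).toNat, (1 : ℂ) / l)

/-- The (real-valued) diagonal Begehr–Hile kernel
`K_{n,n}(z) = (1/(π((n-1)!)²))|z|^{2(n-1)}[log|z|² - 2 Σ_{k=1}^{n-1} 1/k]`. -/
def Knn (n : ℕ) (z : ℂ) : ℝ :=
  (1 / (Real.pi * ((n - 1).factorial : ℝ) ^ 2)) * ‖z‖ ^ (2 * (n - 1)) *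
    (Real.log (‖z‖ ^ 2) - 2 * ∑ k ∈ Finset.Icc 1 (n - 1), (1 : ℝ) / k)

/-- Pochhammer symbol `(λ)_m = λ(λ+1)⋯(λ+m-1)`. -/
def poch (lam : ℝ) (m : ℕ) : ℝ := ∏ i ∈ Finset.range m, (lam + i)

/-- `(λ)_{m;k̂} = ∏_{0 ≤ i ≤ m-1, i ≠ k} (λ+i)`. -/
def pochHat (lam : ℝ) (m k : ℕ) : ℝ := ∏ i ∈ (Finset.range m).erase k, (lam + i)

/-- Ultraspherical (Gegenbauer) polynomial `P_l^{(λ)}`. -/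
def gegenP (lam : ℝ) (l : ℕ) (x : ℝ) : ℝ :=
  ∑ j ∈ Finset.range (l / 2 + 1),
    (-1 : ℝ) ^ j * (poch lam (l - j) / ((j.factorial : ℝ) * ((l - 2 * j).factorial : ℝ))) *
      (2 * x) ^ (l - 2 * j)

/-- The polynomial `Q_l^{(λ)}` (logarithmic companion of `P_l^{(λ)}`). -/
def gegenQ (lam : ℝ) (l : ℕ) (x : ℝ) : ℝ :=
  ∑ j ∈ Finset.range (l / 2 + 1), ∑ k ∈ Finset.range (l - j),
    (-1 : ℝ) ^ (j + 1) *
      (pochHat lam (l - j) k / ((j.factorial : ℝ) * ((l - 2 * j).factorial : ℝ))) *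
      (2 * x) ^ (l - 2 * j)

/-- The singular part `S.P.[K_{n,n}](z,ζ)` of the Begehr–Hile kernel on the upper half-plane. -/
def SP (n : ℕ) (z ζ : ℂ) : ℝ :=
  (1 / (Real.pi * ((n - 1).factorial : ℝ) ^ 2)) *
    ((∑ l ∈ Finset.range (2 * n + 1),
        gegenQ (1 - (n : ℝ)) l
            (((z + Complex.I) * conj (ζ + Complex.I)).re /
              (‖z + Complex.I‖ * ‖ζ + Complex.I‖)) *
          min ((‖z + Complex.I‖ / ‖ζ + Complex.I‖) ^ (l : ℤ))
            ((‖z + Complex.I‖ / ‖ζ + Complex.I‖) ^ (-(l : ℤ))) *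
          max (‖z + Complex.I‖) (‖ζ + Complex.I‖) ^ (2 * n - 2))
      + 2 * (Real.log (max (‖z + Complex.I‖) (‖ζ + Complex.I‖))
              - ∑ k ∈ Finset.Icc 1 (n - 1), (1 : ℝ) / k) *
        (∑ l ∈ Finset.range (2 * n + 1),
          gegenP (1 - (n : ℝ)) l
              (((z + Complex.I) * conj (ζ + Complex.I)).re /
                (‖z + Complex.I‖ * ‖ζ + Complex.I‖)) *
            min ((‖z + Complex.I‖ / ‖ζ + Complex.I‖) ^ (l : ℤ))
              ((‖z + Complex.I‖ / ‖ζ + Complex.I‖) ^ (-(l : ℤ))) *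
            max (‖z + Complex.I‖) (‖ζ + Complex.I‖) ^ (2 * n - 2)))

/-- The modified Begehr–Hile kernel `K̃_{n,n}(z,ζ)`. -/
def Ktilde (n : ℕ) (z ζ : ℂ) : ℝ :=
  if ‖z + Complex.I‖ = ‖ζ + Complex.I‖ then Knn n (z - ζ)
  else Knn n (z - ζ) - SP n z ζ

/-- The modified higher order Pompeiu operator `T̃_{n,n,H}`. -/
def Ttilde (n : ℕ) (f : ℂ → ℂ) (z : ℂ) : ℂ :=
  ∫ ζ in UHP, (Ktilde n z ζ : ℂ) * f ζ

/-- The higher order Poisson kernels `G_n(z,t)` for the upper half-plane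
(`G_1` is the classical Poisson kernel). -/
def poissonG (n : ℕ) (z : ℂ) (t : ℝ) : ℝ :=
  if n ≤ 1 then z.im / ‖(t : ℂ) - z‖ ^ 2
  else
    -(2 * z.im / (((n - 1).factorial : ℝ) * ((n - 2).factorial : ℝ))) *
        ‖z - (t : ℂ)‖ ^ (2 * (n - 2)) *
        Real.log (‖((t : ℂ) - Complex.I) / ((t : ℂ) - z)‖)
      + 2 * ((conj z - z) *
          ((∑ j ∈ Finset.Icc 1 (n - 2),
              (1 / (((n - 1).factorial : ℂ) * ((n - 2).factorial : ℂ) * (j : ℂ) *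
                  (2 * Complex.I))) *
                (conj z - (t : ℂ)) ^ (n - 2) * (z - (t : ℂ)) ^ (n - 2 - j) *
                (z - Complex.I) ^ j)
            + ∑ j ∈ Finset.Icc (n - 1) (2 * (n - 2)), ∑ l ∈ Finset.range (n - 1),
                (1 / (((n - 1).factorial : ℂ) * ((n - 2).factorial : ℂ) * (j : ℂ) *
                    (2 * Complex.I))) *
                  ((n - 2).choose l : ℂ) * (conj z - z) ^ l *
                  (z - (t : ℂ)) ^ (2 * ((n : ℤ) - 2) - (l : ℤ) - (j : ℤ)) *
                  (z - Complex.I) ^ j)).re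

/-- The `j`-th order Poisson integral operator `M_j`. -/
def Mop (j : ℕ) (f : ℝ → ℂ) (z : ℂ) : ℂ :=
  ((4 : ℂ) ^ ((1 : ℤ) - (j : ℤ)) / (Real.pi : ℂ)) * ∫ t : ℝ, (poissonG j z t : ℂ) * f t

/-- The nontangential approach cone `Γ_α(x)`. -/
def cone (α : ℝ) (x : ℝ) : Set ℂ := {z | 0 < z.im ∧ |z.re - x| < α * z.im}

/-- The nontangential maximal function (with values in `ℝ≥0∞`). -/
def ntMax (α : ℝ) (F : ℂ → ℂ) (x : ℝ) : ℝ≥0∞ := ⨆ z ∈ cone α x, (‖F z‖₊ : ℝ≥0∞)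

/-- The `L^p(ℝ)`-norm of an `ℝ≥0∞`-valued function on `ℝ`. -/
def lpNormE (p : ℝ≥0∞) (g : ℝ → ℝ≥0∞) : ℝ≥0∞ :=
  if p = ∞ then essSup g volume else (∫⁻ x, g x ^ p.toReal) ^ (1 / p.toReal)

/-- The `L^p` norm with respect to a measure `μ` (real exponent `p`). -/
def LpN {α : Type*} [MeasurableSpace α] (μ : Measure α) (p : ℝ) (f : α → ℂ) : ℝ≥0∞ :=
  (∫⁻ x, (‖f x‖₊ : ℝ≥0∞) ^ p ∂μ) ^ (1 / p)

/-- The weighted norm `‖f‖_{L^p_w(H)} = (∬_H |f|^p w)^{1/p}`. -/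
def wLp (p : ℝ) (w : ℂ → ℝ) (f : ℂ → ℂ) : ℝ≥0∞ :=
  (∫⁻ ζ in UHP, (‖f ζ‖₊ : ℝ≥0∞) ^ p * ENNReal.ofReal (w ζ)) ^ (1 / p)

/-- The weight class `W^{p,k,α}(H)`. -/
def memW (p k a : ℝ) (w : ℂ → ℝ) : Prop :=
  Measurable w ∧ (∀ᵐ ζ ∂(volume.restrict UHP), 0 < w ζ) ∧
  LocallyIntegrableOn w UHP volume ∧
  (∃ C : ℝ, ∀ᵐ ζ ∂(volume.restrict UHP),
      ‖ζ + Complex.I‖ ^ (k + a) *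
        (1 + |Real.log (‖ζ + Complex.I‖)|) * (w ζ)⁻¹ ≤ C) ∧
  (1 < p → (∫⁻ ζ in UHP, ENNReal.ofReal
      ((‖ζ + Complex.I‖ ^ k * (1 + |Real.log (‖ζ + Complex.I‖)|) ^ p *
        ‖ζ + Complex.I‖ ^ a * (w ζ)⁻¹) ^ (1 / (p - 1)))) < ∞)

/-- A set in `ℂ` has smooth boundary: near every boundary point there is a smooth local
defining function with nonvanishing gradient. -/
def SmoothBoundary (D : Set ℂ) : Prop :=
  ∀ z ∈ frontier D, ∃ ε > 0, ∃ ρ : ℂ → ℝ, ContDiff ℝ (⊤ : ℕ∞) ρ ∧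
    (∀ w ∈ Metric.ball z ε, (w ∈ D ↔ ρ w < 0)) ∧
    ∀ w ∈ Metric.ball z ε, fderiv ℝ ρ w ≠ 0

end



noncomputable def Ffun (C c : ℝ) (m : ℕ) (u : ℝ) : ℝ := C * u ^ m * (Real.log u - c)
noncomputable def Gfun (C c : ℝ) (m : ℕ) (u : ℝ) : ℝ :=
  C * u ^ (m - 1) * ((m : ℝ) * (Real.log u - c) + 1)
noncomputable def Gfun' (C c : ℝ) (m : ℕ) (u : ℝ) : ℝ :=
  C * (((m - 1 : ℕ) : ℝ) * u ^ (m - 1 - 1) * ((m : ℝ) * (Real.log u - c) + 1)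
    + u ^ (m - 1) * ((m : ℝ) * u⁻¹))

lemma hasDerivAt_Ffun (C c : ℝ) (m : ℕ) (hm : 1 ≤ m) {u : ℝ} (hu : u ≠ 0) :
    HasDerivAt (Ffun C c m) (Gfun C c m u) u := by
  have h1 : HasDerivAt (fun u : ℝ => u ^ m) ((m : ℝ) * u ^ (m - 1)) u := by
    simpa using hasDerivAt_pow m u
  have h2 : HasDerivAt (fun u : ℝ => Real.log u - c) u⁻¹ u :=
    (Real.hasDerivAt_log hu).sub_const c
  have h : HasDerivAt (fun y => C * (y ^ m * (Real.log y - c)))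
      (C * ((m : ℝ) * u ^ (m - 1) * (Real.log u - c) + u ^ m * u⁻¹)) u := (h1.mul h2).const_mul C
  convert h using 1
  · ext u; simp only [Ffun]; ring
  · have hpm : u ^ m * u⁻¹ = u ^ (m - 1) := by
      rw [← Nat.succ_pred_eq_of_pos hm, pow_succ]
      field_simp
      simp
    simp only [Gfun]
    rw [mul_add, ← hpm]; ring

lemma hasDerivAt_Gfun (C c : ℝ) (m : ℕ) {u : ℝ} (hu : u ≠ 0) :
    HasDerivAt (Gfun C c m) (Gfun' C c m u) u := by
  have h1 : HasDerivAt (fun u : ℝ => u ^ (m-1)) (((m-1:ℕ) : ℝ) * u ^ (m - 1 - 1)) u := by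
    simpa using hasDerivAt_pow (m-1) u
  have h2 : HasDerivAt (fun u : ℝ => (m:ℝ) * (Real.log u - c) + 1) ((m:ℝ) * u⁻¹) u :=
    (((Real.hasDerivAt_log hu).sub_const c).const_mul (m:ℝ)).add_const 1
  have h : HasDerivAt (fun y => C * (y ^ (m-1) * ((m:ℝ) * (Real.log y - c) + 1)))
      (C * (((m-1:ℕ) : ℝ) * u ^ (m - 1 - 1) * ((m:ℝ) * (Real.log u - c) + 1)
        + u ^ (m-1) * ((m:ℝ) * u⁻¹))) u := (h1.mul h2).const_mul C
  convert h using 1 <;> first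
    | (ext u; simp only [Gfun]; ring)
    | (simp only [Gfun'])

lemma lapSlice (C c : ℝ) (m : ℕ) (hm : 1 ≤ m) (a r x₀ : ℝ) (h₀ : 0 < (x₀ - a)^2 + r^2) :
    iteratedDeriv 2 (fun x : ℝ => Ffun C c m ((x - a)^2 + r^2)) x₀
      = Gfun' C c m ((x₀-a)^2 + r^2) * (2*(x₀-a))^2 + Gfun C c m ((x₀-a)^2 + r^2) * 2 := by
  set q : ℝ → ℝ := fun x => (x - a)^2 + r^2 with hqdef
  have hqc : Continuous q := by continuity
  have hq : ∀ᶠ x in nhds x₀, 0 < q x :=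
    hqc.continuousAt.eventually_mem (isOpen_Ioi.mem_nhds h₀)
  have hq' : ∀ x : ℝ, HasDerivAt q (2*(x - a)) x := by
    intro x
    have := (((hasDerivAt_id x).sub_const a).pow 2).add_const (r^2)
    rw [hqdef]; simpa using this
  have hder : ∀ᶠ x in nhds x₀, HasDerivAt (fun x => Ffun C c m (q x))
      (Gfun C c m (q x) * (2*(x - a))) x := by
    filter_upwards [hq] with x hx
    exact (hasDerivAt_Ffun C c m hm hx.ne').comp x (hq' x)
  have heq : deriv (fun x => Ffun C c m (q x)) =ᶠ[nhds x₀]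
      fun x => Gfun C c m (q x) * (2*(x - a)) := by
    filter_upwards [hder] with x hx using hx.deriv
  rw [iteratedDeriv_succ, iteratedDeriv_one, heq.deriv_eq]
  have hphi : HasDerivAt (fun x => Gfun C c m (q x) * (2*(x - a)))
      ((Gfun' C c m (q x₀) * (2*(x₀ - a))) * (2*(x₀-a)) + Gfun C c m (q x₀) * 2) x₀ := by
    have hG : HasDerivAt (fun x => Gfun C c m (q x)) (Gfun' C c m (q x₀) * (2*(x₀ - a))) x₀ :=
      (hasDerivAt_Gfun C c m (u := q x₀) h₀.ne').comp x₀ (hq' x₀)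
    have hlin : HasDerivAt (fun x : ℝ => 2*(x - a)) 2 x₀ := by
      simpa using ((hasDerivAt_id x₀).sub_const a).const_mul (2:ℝ)
    exact hG.mul hlin
  rw [hphi.deriv]; ring

lemma lapAlgebra (C c : ℝ) (k : ℕ) (u : ℝ) (hu : 0 < u) :
    Gfun' C c (k+1) u * (4*u) + Gfun C c (k+1) u * 4
      = 4 * Ffun (C * ((k:ℝ)+1)^2) (c - 2/((k:ℝ)+1)) k u := by
  cases k with
  | zero => simp only [Ffun, Gfun, Gfun']; push_cast; field_simp; ring
  | succ j =>
    simp only [Ffun, Gfun, Gfun', Nat.add_sub_cancel]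
    have h1 : u ^ (j + 1) = u ^ j * u := pow_succ u j
    push_cast
    field_simp
    ring

lemma Knn_eq_Ffun (n : ℕ) (w : ℂ) :
    Knn n w = Ffun (1 / (Real.pi * ((n-1).factorial : ℝ)^2))
      (2 * ∑ k ∈ Finset.Icc 1 (n-1), (1:ℝ)/k) (n-1) (Complex.normSq w) := by
  simp only [Knn, Ffun, pow_mul, Complex.sq_norm]

/-- `Δ_z K_{n,n}(z - ζ) = 4 K_{n-1,n-1}(z - ζ)` for `z ≠ ζ`, and `z ↦ K_{n,n}(z-ζ)`
is smooth near any such `z`. -/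
theorem BH_kernel_lap (n : ℕ) (hn : 2 ≤ n) (z ζ : ℂ) (hzζ : z ≠ ζ) :
    ContDiffAt ℝ (⊤ : ℕ∞) (fun w => Knn n (w - ζ)) z ∧
    lap (fun w => Knn n (w - ζ)) z = 4 * Knn (n - 1) (z - ζ) := by
  obtain ⟨k, rfl⟩ : ∃ k, n = k + 2 := ⟨n - 2, by omega⟩
  set C : ℝ := 1 / (Real.pi * ((k+1).factorial : ℝ)^2) with hCdef
  set c : ℝ := 2 * ∑ i ∈ Finset.Icc 1 (k+1), (1:ℝ)/i with hcdef
  set u : ℝ := Complex.normSq (z - ζ) with hudef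
  have hu : 0 < u := Complex.normSq_pos.mpr (sub_ne_zero.mpr hzζ)
  have hK : ∀ w : ℂ, Knn (k+2) w = Ffun C c (k+1) (Complex.normSq w) := by
    intro w
    exact Knn_eq_Ffun (k+2) w
  constructor
  · have hfe : (fun w => Knn (k+2) (w - ζ))
        = fun w => Ffun C c (k+1) (Complex.normSq (w - ζ)) := funext fun w => hK _
    rw [hfe]
    have hns : ContDiff ℝ (⊤ : ℕ∞) (fun w : ℂ => Complex.normSq (w - ζ)) := by
      have h2 : ContDiff ℝ (⊤ : ℕ∞) (Complex.normSq : ℂ → ℝ) := by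
        have : (Complex.normSq : ℂ → ℝ) = fun z => z.re * z.re + z.im * z.im :=
          funext Complex.normSq_apply
        rw [this]
        exact (Complex.reCLM.contDiff.mul Complex.reCLM.contDiff).add
          (Complex.imCLM.contDiff.mul Complex.imCLM.contDiff)
      exact h2.comp (contDiff_id.sub contDiff_const)
    have hF : ContDiffAt ℝ (⊤ : ℕ∞) (Ffun C c (k+1)) u := by
      have : ContDiffAt ℝ (⊤ : ℕ∞) (fun v : ℝ => C * v ^ (k+1) * (Real.log v - c)) u :=
        (contDiffAt_const.mul (contDiffAt_id.pow (k+1))).mul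
          ((Real.contDiffAt_log.mpr hu.ne').sub contDiffAt_const)
      exact this
    exact hF.comp z hns.contDiffAt
  · have hx : (fun x : ℝ => Knn (k+2) ((⟨x, z.im⟩ : ℂ) - ζ))
        = fun x => Ffun C c (k+1) ((x - ζ.re)^2 + (z.im - ζ.im)^2) := by
      funext x
      rw [hK]
      congr 1
      simp [Complex.normSq_apply]
      ring
    have hy : (fun y : ℝ => Knn (k+2) ((⟨z.re, y⟩ : ℂ) - ζ))
        = fun y => Ffun C c (k+1) ((y - ζ.im)^2 + (z.re - ζ.re)^2) := by
      funext y
      rw [hK]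
      congr 1
      simp [Complex.normSq_apply]
      ring
    have huexp : u = (z.re - ζ.re)^2 + (z.im - ζ.im)^2 := by
      simp [hudef, Complex.normSq_apply]
      ring
    have h₀x : 0 < (z.re - ζ.re)^2 + (z.im - ζ.im)^2 := huexp ▸ hu
    have h₀y : 0 < (z.im - ζ.im)^2 + (z.re - ζ.re)^2 := by linarith
    have hsx := lapSlice C c (k+1) (by omega) ζ.re (z.im - ζ.im) z.re h₀x
    have hsy := lapSlice C c (k+1) (by omega) ζ.im (z.re - ζ.re) z.im h₀y
    have hK' : Knn (k+2-1) (z - ζ) = Ffun (1 / (Real.pi * ((k.factorial : ℝ))^2))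
        (2 * ∑ i ∈ Finset.Icc 1 k, (1:ℝ)/i) k u := by
      exact Knn_eq_Ffun (k+1) (z - ζ)
    rw [lap, hx, hy, hsx, hsy, hK']
    have hux : (z.re - ζ.re)^2 + (z.im - ζ.im)^2 = u := huexp.symm
    have huy : (z.im - ζ.im)^2 + (z.re - ζ.re)^2 = u := by linarith
    rw [hux, huy]
    have halg := lapAlgebra C c k u hu
    have hsum : Gfun' C c (k+1) u * (2*(z.re - ζ.re))^2 + Gfun C c (k+1) u * 2
        + (Gfun' C c (k+1) u * (2*(z.im - ζ.im))^2 + Gfun C c (k+1) u * 2)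
        = Gfun' C c (k+1) u * (4*u) + Gfun C c (k+1) u * 4 := by
      rw [huexp]; ring
    rw [hsum, halg]
    have hCeq : C * ((k:ℝ)+1)^2 = 1 / (Real.pi * ((k.factorial : ℝ))^2) := by
      rw [hCdef, Nat.factorial_succ]
      have h1 : (Real.pi : ℝ) ≠ 0 := Real.pi_ne_zero
      have h2 : ((k.factorial : ℝ)) ≠ 0 := Nat.cast_ne_zero.mpr k.factorial_ne_zero
      have h3 : ((k:ℝ) + 1) ≠ 0 := by positivity
      push_cast
      field_simp
    have hceq : c - 2/((k:ℝ)+1) = 2 * ∑ i ∈ Finset.Icc 1 k, (1:ℝ)/i := by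
      rw [hcdef, Finset.sum_Icc_succ_top (by omega)]
      push_cast
      ring
    rw [hCeq, hceq]
end

section
/- For every integer n ≥ 1 and every z ∈ ℂ with z ≠ 0, the Wirtinger derivatives of K_{n,n} satisfy ∂_z K_{n,n}(z) = K_{n−1,n}(z) and ∂_{conj(z)} K_{n,n}(z) = K_{n,n−1}(z), where ∂_z = (1/2)(∂/∂x − i·∂/∂y) and ∂_{conj(z)} = (1/2)(∂/∂x + i·∂/∂y) (z = x+iy). -/
open MeasureTheory Complex Filter Topology Finset
open scoped Real ENNReal NNReal ComplexConjugate

noncomputable def Fk (c s : ℂ) (a : ℕ) (w : ℂ) : ℂ :=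
  c * w ^ a * (conj w) ^ a * (((Real.log (w.re * w.re + w.im * w.im) : ℝ) : ℂ) - s)

lemma hc1 (y : ℝ) (a : ℕ) (x : ℝ) :
    HasDerivAt (fun t : ℝ => ((t : ℂ) + (y : ℂ) * I) ^ a)
      ((a : ℂ) * ((x : ℂ) + (y : ℂ) * I) ^ (a - 1)) x := by
  have h : HasDerivAt (fun w : ℂ => (w + (y : ℂ) * I) ^ a)
      ((a : ℂ) * ((x : ℂ) + (y : ℂ) * I) ^ (a - 1)) (x : ℂ) := by
    simpa using ((hasDerivAt_id ((x : ℂ))).add_const ((y:ℂ)*I)).fun_pow a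
  exact h.comp_ofReal

lemma hc2 (y : ℝ) (a : ℕ) (x : ℝ) :
    HasDerivAt (fun t : ℝ => ((t : ℂ) - (y : ℂ) * I) ^ a)
      ((a : ℂ) * ((x : ℂ) - (y : ℂ) * I) ^ (a - 1)) x := by
  have h : HasDerivAt (fun w : ℂ => (w - (y : ℂ) * I) ^ a)
      ((a : ℂ) * ((x : ℂ) - (y : ℂ) * I) ^ (a - 1)) (x : ℂ) := by
    simpa using ((hasDerivAt_id ((x : ℂ))).sub_const ((y:ℂ)*I)).fun_pow a
  exact h.comp_ofReal

lemma hc3 (x : ℝ) (a : ℕ) (y : ℝ) :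
    HasDerivAt (fun t : ℝ => ((x : ℂ) + (t : ℂ) * I) ^ a)
      ((a : ℂ) * ((x : ℂ) + (y : ℂ) * I) ^ (a - 1) * I) y := by
  have h : HasDerivAt (fun w : ℂ => ((x : ℂ) + w * I) ^ a)
      ((a : ℂ) * ((x : ℂ) + (y : ℂ) * I) ^ (a - 1) * I) ((y : ℂ)) := by
    simpa [mul_comm] using (((hasDerivAt_id ((y : ℂ))).mul_const I).const_add (x:ℂ)).fun_pow a
  exact h.comp_ofReal

lemma hc4 (x : ℝ) (a : ℕ) (y : ℝ) :
    HasDerivAt (fun t : ℝ => ((x : ℂ) - (t : ℂ) * I) ^ a)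
      (-((a : ℂ) * ((x : ℂ) - (y : ℂ) * I) ^ (a - 1) * I)) y := by
  have h : HasDerivAt (fun w : ℂ => ((x : ℂ) - w * I) ^ a)
      (-((a : ℂ) * ((x : ℂ) - (y : ℂ) * I) ^ (a - 1) * I)) ((y : ℂ)) := by
    simpa [mul_comm] using (((hasDerivAt_id ((y : ℂ))).mul_const I).const_sub (x:ℂ)).fun_pow a
  exact h.comp_ofReal

lemma hlogx (y : ℝ) (x : ℝ) (h : x * x + y * y ≠ 0) :
    HasDerivAt (fun t : ℝ => ((Real.log (t * t + y * y) : ℝ) : ℂ))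
      ((((x + x) / (x * x + y * y) : ℝ) : ℂ)) x := by
  have h1 : HasDerivAt (fun t : ℝ => t * t + y * y) (x + x) x := by
    simpa using ((hasDerivAt_id x).mul (hasDerivAt_id x)).add_const (y*y)
  have h2 := (Real.hasDerivAt_log h).comp x h1
  have h3 : HasDerivAt (fun t : ℝ => Real.log (t * t + y * y))
      ((x + x) / (x * x + y * y)) x := by
    simpa [div_eq_inv_mul, Function.comp_def] using h2
  exact h3.ofReal_comp

lemma Fk_line_x (c s : ℂ) (a : ℕ) (y : ℝ) :
    (fun t : ℝ => Fk c s a ⟨t, y⟩) =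
    (fun t : ℝ => c * ((t:ℂ)+(y:ℂ)*I)^a * ((t:ℂ)-(y:ℂ)*I)^a *
      (((Real.log (t*t+y*y) : ℝ) : ℂ) - s)) := by
  funext t
  have h1 : (⟨t, y⟩ : ℂ) = (t:ℂ)+(y:ℂ)*I := Complex.mk_eq_add_mul_I t y
  have h2 : conj ((t:ℂ)+(y:ℂ)*I) = (t:ℂ)-(y:ℂ)*I := by
    simp [map_add, map_mul, Complex.conj_ofReal, Complex.conj_I]; ring
  have h3 : (⟨t, y⟩ : ℂ).re = t := rfl
  have h4 : (⟨t, y⟩ : ℂ).im = y := rfl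
  rw [Fk, h3, h4, h1, h2]

lemma Fk_line_y (c s : ℂ) (a : ℕ) (x : ℝ) :
    (fun t : ℝ => Fk c s a ⟨x, t⟩) =
    (fun t : ℝ => c * ((x:ℂ)+(t:ℂ)*I)^a * ((x:ℂ)-(t:ℂ)*I)^a *
      (((Real.log (x*x+t*t) : ℝ) : ℂ) - s)) := by
  funext t
  have h1 : (⟨x, t⟩ : ℂ) = (x:ℂ)+(t:ℂ)*I := Complex.mk_eq_add_mul_I x t
  have h2 : conj ((x:ℂ)+(t:ℂ)*I) = (x:ℂ)-(t:ℂ)*I := by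
    simp [map_add, map_mul, Complex.conj_ofReal, Complex.conj_I]; ring
  rw [Fk, show (⟨x, t⟩ : ℂ).re = x from rfl, show (⟨x, t⟩ : ℂ).im = t from rfl, h1, h2]

lemma dFx (c s : ℂ) (a : ℕ) (x y : ℝ) (h : x*x+y*y ≠ 0) :
    HasDerivAt (fun t : ℝ => Fk c s a ⟨t, y⟩)
      (c * ((a:ℂ) * ((x:ℂ)+(y:ℂ)*I)^(a-1)) * ((x:ℂ)-(y:ℂ)*I)^a *
          (((Real.log (x*x+y*y) : ℝ) : ℂ) - s)
        + c * ((x:ℂ)+(y:ℂ)*I)^a * ((a:ℂ) * ((x:ℂ)-(y:ℂ)*I)^(a-1)) *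
          (((Real.log (x*x+y*y) : ℝ) : ℂ) - s)
        + c * ((x:ℂ)+(y:ℂ)*I)^a * ((x:ℂ)-(y:ℂ)*I)^a *
          (((x+x)/(x*x+y*y) : ℝ) : ℂ)) x := by
  rw [Fk_line_x]
  have := (((hc1 y a x).const_mul c).fun_mul (hc2 y a x)).fun_mul ((hlogx y x h).sub_const s)
  refine this.congr_deriv ?_
  ring

lemma dFy (c s : ℂ) (a : ℕ) (x y : ℝ) (h : x*x+y*y ≠ 0) :
    HasDerivAt (fun t : ℝ => Fk c s a ⟨x, t⟩)
      (c * ((a:ℂ) * ((x:ℂ)+(y:ℂ)*I)^(a-1) * I) * ((x:ℂ)-(y:ℂ)*I)^a *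
          (((Real.log (x*x+y*y) : ℝ) : ℂ) - s)
        + c * ((x:ℂ)+(y:ℂ)*I)^a * (-((a:ℂ) * ((x:ℂ)-(y:ℂ)*I)^(a-1) * I)) *
          (((Real.log (x*x+y*y) : ℝ) : ℂ) - s)
        + c * ((x:ℂ)+(y:ℂ)*I)^a * ((x:ℂ)-(y:ℂ)*I)^a *
          (((y+y)/(x*x+y*y) : ℝ) : ℂ)) y := by
  rw [Fk_line_y]
  have hlog : HasDerivAt (fun t : ℝ => ((Real.log (x*x+t*t) : ℝ) : ℂ))
      ((((y+y)/(x*x+y*y) : ℝ) : ℂ)) y := by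
    have h1 : HasDerivAt (fun t : ℝ => x*x + t*t) (y+y) y := by
      simpa using (((hasDerivAt_id y).mul (hasDerivAt_id y)).const_add (x*x))
    have h3 : HasDerivAt (fun t : ℝ => Real.log (x*x+t*t)) ((y+y)/(x*x+y*y)) y := by
      simpa [div_eq_inv_mul, Function.comp_def] using (Real.hasDerivAt_log h).comp y h1
    exact h3.ofReal_comp
  have := (((hc3 x a y).const_mul c).fun_mul (hc4 x a y)).fun_mul (hlog.sub_const s)
  refine this.congr_deriv ?_
  ring

lemma pow_pred (Z : ℂ) (hZ : Z ≠ 0) (a : ℕ) : (a:ℂ) * Z^(a-1) = (a:ℂ) * Z^a / Z := by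
  cases a with
  | zero => simp
  | succ b => rw [pow_succ]; field_simp; simp

lemma dZ_Fk (c s : ℂ) (a : ℕ) (z : ℂ) (hz : z ≠ 0) :
    dZ (Fk c s a) z =
      c * z^a * (conj z)^a *
        ((a:ℂ) * (((Real.log (z.re*z.re+z.im*z.im) : ℝ) : ℂ) - s) + 1) / z ∧
    dZbar (Fk c s a) z =
      c * z^a * (conj z)^a *
        ((a:ℂ) * (((Real.log (z.re*z.re+z.im*z.im) : ℝ) : ℂ) - s) + 1) / conj z := by
  obtain ⟨x, y⟩ := z
  have hN : x*x + y*y ≠ 0 := by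
    have := Complex.normSq_pos.mpr hz
    rw [Complex.normSq_mk] at this; exact ne_of_gt this
  have hre : (⟨x, y⟩ : ℂ).re = x := rfl
  have him : (⟨x, y⟩ : ℂ).im = y := rfl
  have hdx := (dFx c s a x y hN).deriv
  have hdy := (dFy c s a x y hN).deriv
  have hZ : (x:ℂ)+(y:ℂ)*I ≠ 0 := by rw [← Complex.mk_eq_add_mul_I]; exact hz
  have hzz : (⟨x, y⟩ : ℂ) = (x:ℂ)+(y:ℂ)*I := Complex.mk_eq_add_mul_I x y
  have hcz : conj (⟨x, y⟩ : ℂ) = (x:ℂ)-(y:ℂ)*I := by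
    rw [hzz, map_add, map_mul, Complex.conj_ofReal, Complex.conj_ofReal, Complex.conj_I]
    ring
  have hW : (x:ℂ)-(y:ℂ)*I ≠ 0 := by
    rw [← hcz]
    simpa using hz
  have key : (x:ℂ)*(x:ℂ)+(y:ℂ)*(y:ℂ) = ((x:ℂ)+(y:ℂ)*I)*((x:ℂ)-(y:ℂ)*I) := by
    linear_combination ((y:ℂ)*(y:ℂ)) * Complex.I_mul_I
  have hp1 := pow_pred ((x:ℂ)+(y:ℂ)*I) hZ a
  have hp2 := pow_pred ((x:ℂ)-(y:ℂ)*I) hW a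
  have h3 : (I:ℂ)^3 = -I := by rw [pow_succ, Complex.I_sq]; ring
  have h4 : (I:ℂ)^4 = 1 := by rw [show (4:ℕ) = 2*2 from rfl, pow_mul, Complex.I_sq]; norm_num
  constructor
  · rw [dZ, hre, him, hdx, hdy, hcz, hzz]
    rw [hp1, hp2]
    push_cast
    rw [key]
    field_simp
    ring_nf
    simp only [h3, h4, Complex.I_sq]
    ring
  · rw [dZbar, hre, him, hdx, hdy, hcz, hzz]
    rw [hp1, hp2]
    push_cast
    rw [key]
    field_simp
    ring_nf
    simp only [h3, h4, Complex.I_sq]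
    ring

lemma BHK_diag (n : ℕ) (hn : 1 ≤ n) :
    BHK n n = Fk (1 / (((n-1).factorial : ℂ) * ((n-1).factorial : ℂ) * (Real.pi : ℂ)))
      (∑ k ∈ Finset.Icc 1 (n-1), (1:ℂ)/k + ∑ k ∈ Finset.Icc 1 (n-1), (1:ℂ)/k) (n-1) := by
  funext z
  simp only [BHK, Fk]
  rw [if_neg (by omega : ¬ (n:ℤ) ≤ 0), if_neg (by omega : ¬ (n:ℤ) ≤ 0)]
  have h1 : ((n:ℤ)-1).toNat = n - 1 := by omega
  have h2 : (n:ℤ)-1 = ((n-1 : ℕ) : ℤ) := by omega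
  rw [h1, h2, zpow_natCast, zpow_natCast]
  have h3 : ‖z‖ ^ 2 = z.re*z.re + z.im*z.im := by
    rw [Complex.sq_norm, Complex.normSq_apply]
  rw [h3]
  ring


lemma key_alg (b : ℕ) (hb1 : ((b:ℂ)+1) ≠ 0) (hbf : ((b.factorial:ℂ)) ≠ 0)
    (hπ : ((Real.pi:ℂ)) ≠ 0) : ∀ L S0 : ℂ,
    (1 / (((((b:ℂ)+1)*(b.factorial:ℂ))) * ((((b:ℂ)+1)*(b.factorial:ℂ))) * (Real.pi:ℂ))) *
      (((b:ℂ)+1) * (L - ((S0 + 1/((b:ℂ)+1)) + (S0 + 1/((b:ℂ)+1)))) + 1)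
    = (1 / ((b.factorial:ℂ) * (((b:ℂ)+1)*(b.factorial:ℂ)) * (Real.pi:ℂ))) *
      (L - S0 - (S0 + 1/((b:ℂ)+1))) := by
  intro L S0
  have h : ((b:ℂ)+1) * (1/((b:ℂ)+1)) = 1 := mul_one_div_cancel hb1
  have hu : ((b:ℂ)+1) * (L - ((S0 + 1/((b:ℂ)+1)) + (S0 + 1/((b:ℂ)+1)))) + 1
      = ((b:ℂ)+1) * (L - S0 - (S0 + 1/((b:ℂ)+1))) := by
    linear_combination (-1 : ℂ) * h
  rw [hu, one_div_mul_eq_div, one_div_mul_eq_div,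
    div_eq_div_iff
      (mul_ne_zero (mul_ne_zero (mul_ne_zero hb1 hbf) (mul_ne_zero hb1 hbf)) hπ)
      (mul_ne_zero (mul_ne_zero hbf (mul_ne_zero hb1 hbf)) hπ)]
  ring


/-- Wirtinger derivatives of the diagonal Begehr–Hile kernel:
`∂_z K_{n,n} = K_{n-1,n}` and `∂_{z̄} K_{n,n} = K_{n,n-1}` away from the origin. -/
theorem BH_kernel_wirtinger (n : ℕ) (hn : 1 ≤ n) (z : ℂ) (hz : z ≠ 0) :
    dZ (BHK n n) z = BHK ((n : ℤ) - 1) n z ∧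
    dZbar (BHK n n) z = BHK n ((n : ℤ) - 1) z := by
  have hw : conj z ≠ 0 := fun h => hz (by simpa using congrArg (starRingEnd ℂ) h)
  have habs : ‖z‖ ^ 2 = z.re*z.re + z.im*z.im := by
    rw [Complex.sq_norm, Complex.normSq_apply]
  have hπ : (Real.pi : ℂ) ≠ 0 := Complex.ofReal_ne_zero.mpr Real.pi_ne_zero
  obtain ⟨hdz, hdzb⟩ := dZ_Fk
    (1 / (((n-1).factorial : ℂ) * ((n-1).factorial : ℂ) * (Real.pi : ℂ)))
    (∑ k ∈ Finset.Icc 1 (n-1), (1:ℂ)/k + ∑ k ∈ Finset.Icc 1 (n-1), (1:ℂ)/k) (n-1) z hz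
  rw [BHK_diag n hn]
  rcases n with _ | n'
  · exact absurd hn (by norm_num)
  rcases n' with _ | b
  · -- n = 1
    rw [hdz, hdzb]
    constructor
    · simp only [BHK]
      rw [if_pos (by norm_num : ((1:ℕ):ℤ) - 1 ≤ 0)]
      norm_num
      field_simp
    · simp only [BHK]
      rw [if_neg (by norm_num : ¬ ((1:ℕ):ℤ) ≤ 0), if_pos (by norm_num : ((1:ℕ):ℤ) - 1 ≤ 0)]
      norm_num
      field_simp
  · -- n = b + 2
    have e1 : (((b+2:ℕ):ℤ)) - 1 - 1 = ((b:ℕ):ℤ) := by push_cast; ring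
    have e2 : (((b+2:ℕ):ℤ)) - 1 = ((b+1:ℕ):ℤ) := by push_cast; ring
    have t1 : ((((b+2:ℕ):ℤ)) - 1 - 1).toNat = b := by omega
    have t2 : ((((b+2:ℕ):ℤ)) - 1).toNat = b + 1 := by omega
    have hfac : ((b+1).factorial : ℂ) = ((b:ℂ)+1) * (b.factorial : ℂ) := by
      rw [Nat.factorial_succ]; push_cast; ring
    have hsum : (∑ k ∈ Finset.Icc 1 (b+1), (1:ℂ)/k)
        = (∑ k ∈ Finset.Icc 1 b, (1:ℂ)/k) + 1/((b:ℂ)+1) := by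
      rw [Finset.sum_Icc_succ_top (by omega : 1 ≤ b+1)]; push_cast; ring
    have hb1 : ((b:ℂ)+1) ≠ 0 := by
      have : ((b+1:ℕ):ℂ) ≠ 0 := Nat.cast_ne_zero.mpr (by omega)
      push_cast at this; exact this
    have hbf : (b.factorial : ℂ) ≠ 0 := Nat.cast_ne_zero.mpr b.factorial_ne_zero
    have hb1' : (1:ℂ) + (b:ℂ) ≠ 0 := by rw [add_comm]; exact hb1
    have hcoef : ∀ L : ℂ,
        (1 / (((b+1).factorial:ℂ) * ((b+1).factorial:ℂ) * (Real.pi:ℂ))) *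
          (((b:ℂ)+1) * (L - ((∑ k ∈ Finset.Icc 1 (b+1), (1:ℂ)/k) + ∑ k ∈ Finset.Icc 1 (b+1), (1:ℂ)/k)) + 1)
        = (1 / ((b.factorial:ℂ) * ((b+1).factorial:ℂ) * (Real.pi:ℂ))) *
          (L - (∑ k ∈ Finset.Icc 1 b, (1:ℂ)/k) - ∑ k ∈ Finset.Icc 1 (b+1), (1:ℂ)/k) := by
      intro L
      rw [hsum, hfac]
      exact key_alg b hb1 hbf hπ L _
    rw [hdz, hdzb]
    constructor
    · simp only [BHK]
      rw [if_neg (by omega : ¬ ((b+2:ℕ):ℤ) - 1 ≤ 0), if_neg (by omega : ¬ ((b+2:ℕ):ℤ) ≤ 0)]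
      rw [t1, t2, e1, e2, zpow_natCast, zpow_natCast, habs]
      simp only [show b+1+1-1 = b+1 from rfl]
      rw [div_eq_iff hz]
      push_cast
      linear_combination (z^b * z * (conj z)^(b+1)) *
        hcoef (((Real.log (z.re*z.re+z.im*z.im) : ℝ) : ℂ))
    · simp only [BHK]
      rw [if_neg (by omega : ¬ ((b+2:ℕ):ℤ) ≤ 0), if_neg (by omega : ¬ ((b+2:ℕ):ℤ) - 1 ≤ 0)]
      rw [t1, t2, e1, e2, zpow_natCast, zpow_natCast, habs]
      simp only [show b+1+1-1 = b+1 from rfl]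
      rw [div_eq_iff hw]
      push_cast
      linear_combination (z^(b+1) * (conj z)^b * conj z) *
        hcoef (((Real.log (z.re*z.re+z.im*z.im) : ℝ) : ℂ))
end

section
/- For every integer n ≥ 1 and all z, ζ ∈ H with z ≠ ζ, the modified Begehr–Hile kernel is symmetric: K̃_{n,n}(z,ζ) = K̃_{n,n}(ζ,z). -/
open MeasureTheory Complex Filter Topology Finset
open scoped Real ENNReal NNReal ComplexConjugate

private lemma Knn_symm_aux (n : ℕ) (z ζ : ℂ) : Knn n (z - ζ) = Knn n (ζ - z) := by
  unfold Knn
  rw [norm_sub_rev z ζ]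

private lemma min_zpow_symm (a b : ℝ) (l : ℤ) :
    min ((a / b) ^ l) ((a / b) ^ (-l)) = min ((b / a) ^ l) ((b / a) ^ (-l)) := by
  rw [zpow_neg, zpow_neg, ← inv_zpow, ← inv_zpow, inv_div, inv_div, min_comm]

private lemma re_mul_conj_symm (w v : ℂ) : (w * conj v).re = (v * conj w).re := by
  have : v * conj w = conj (w * conj v) := by rw [RingHom.map_mul, Complex.conj_conj, mul_comm]
  rw [this, Complex.conj_re]

private lemma SP_symm_aux (n : ℕ) (z ζ : ℂ) : SP n z ζ = SP n ζ z := by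
  unfold SP
  rw [re_mul_conj_symm (ζ + Complex.I) (z + Complex.I),
    mul_comm (‖ζ + Complex.I‖) (‖z + Complex.I‖),
    max_comm (‖ζ + Complex.I‖) (‖z + Complex.I‖)]
  congr 2
  · apply Finset.sum_congr rfl
    intro l _
    rw [min_zpow_symm (‖ζ + Complex.I‖) (‖z + Complex.I‖) l]
  · congr 1
    apply Finset.sum_congr rfl
    intro l _
    rw [min_zpow_symm (‖ζ + Complex.I‖) (‖z + Complex.I‖) l]

/-- Symmetry of the modified Begehr–Hile kernel: `K̃_{n,n}(z,ζ) = K̃_{n,n}(ζ,z)`. -/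
theorem Ktilde_symm (n : ℕ) (hn : 1 ≤ n) (z ζ : ℂ) (hz : z ∈ UHP) (hζ : ζ ∈ UHP)
    (hne : z ≠ ζ) : Ktilde n z ζ = Ktilde n ζ z := by
  unfold Ktilde
  by_cases h : ‖z + Complex.I‖ = ‖ζ + Complex.I‖
  · rw [if_pos h, if_pos h.symm, Knn_symm_aux]
  · rw [if_neg h, if_neg (fun h' => h h'.symm), Knn_symm_aux, SP_symm_aux]
end
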